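/- For n = 0, the group B_{2^k·1} = ⟨x, y | x^{2^k} = y = 1, xyx^{-1} = y^{-1}⟩ is isomorphic to the cyclic group Z/2^k, and for k = 2, the group B_{4(2n+1)} = ⟨x, y | x^4 = y^{2n+1} = 1, xyx^{-1} = y^{-1}⟩ is isomorphic to the generalized quaternion group Q_{4(2n+1)} = ⟨a, b | a^{2n+1} = b^2, aba = b⟩. -/

import Mathlib

/-- Relators for `B_{2ᵏ(2n+1)} = ⟨x, y | x^(2ᵏ) = y^(2n+1) = 1, xyx⁻¹ = y⁻¹⟩`,
with generator `0 = x`, `1 = y`. -/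
def bRels (k n : ℕ) : Set (FreeGroup (Fin 2)) :=
  {FreeGroup.of 0 ^ (2 ^ k),
   FreeGroup.of 1 ^ (2 * n + 1),
   FreeGroup.of 0 * FreeGroup.of 1 * (FreeGroup.of 0)⁻¹ * FreeGroup.of 1}

/-- The group `B_{2ᵏ(2n+1)}`. -/
abbrev BGrp (k n : ℕ) := PresentedGroup (bRels k n)

/-- Relators for the generalized quaternion group
`Q_{4m} = ⟨a, b | aᵐ = b², aba = b⟩`, with generator `0 = a`, `1 = b`. -/
def quaternionRels (m : ℕ) : Set (FreeGroup (Fin 2)) :=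
  {FreeGroup.of 0 ^ m * ((FreeGroup.of 1) ^ 2)⁻¹,
   FreeGroup.of 0 * FreeGroup.of 1 * FreeGroup.of 0 * (FreeGroup.of 1)⁻¹}

/-- The generalized quaternion group `Q_{4m}`. -/
abbrev QuatGrp (m : ℕ) := PresentedGroup (quaternionRels m)

/-! For `n = 0` the relator `y` kills `y`, leaving the single relation `x ^ 2ᵏ = 1`.
For `k = 2` and `m = 2n + 1`, the maps `x ↦ b, y ↦ a²` and `a ↦ x² y^(n+1), b ↦ x` are mutually
inverse. In `Q_{4m}` conjugation by `b` inverts `a`, which forces `b⁴ = 1` and `a^(2m) = 1`; in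
`B_{4m}` the element `x²` is central of order dividing 2, and `y^(n+1)` is the square root of `y`
in the cyclic group `⟨y⟩` of odd order `m`, so `x² y^(n+1)` squares to `y` and has `m`-th power
`x²`. -/

section Relations

variable {G : Type*} [Group G]

theorem mul_pow_mul_inv_eq_inv_pow {x y : G} (h : x * y * x⁻¹ = y⁻¹) (j : ℕ) :
    x * y ^ j * x⁻¹ = (y ^ j)⁻¹ := by
  rw [← conj_pow, h, inv_pow]

theorem commute_sq_of_mul_mul_inv_eq_inv {x y : G} (h : x * y * x⁻¹ = y⁻¹) :
    Commute (x ^ 2) y := by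
  have hy : SemiconjBy x y y⁻¹ := mul_inv_eq_iff_eq_mul.mp h
  have hy_inv : SemiconjBy x y⁻¹ y := by simpa using hy.inv_right
  rw [sq]
  exact hy_inv.mul_left hy

theorem mul_mul_inv_eq_inv_of_mul_mul_eq {a b : G} (h : a * b * a = b) : b * a * b⁻¹ = a⁻¹ :=
  calc b * a * b⁻¹ = b * a * (a * b * a)⁻¹ := by rw [h]
    _ = a⁻¹ := by group

theorem pow_four_eq_one_of_pow_eq_sq {a b : G} {m : ℕ} (hab : a ^ m = b ^ 2) (h : a * b * a = b) :
    b ^ 4 = 1 := by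
  have hconj := mul_pow_mul_inv_eq_inv_pow (mul_mul_inv_eq_inv_of_mul_mul_eq h) m
  rw [hab] at hconj
  calc b ^ 4 = b ^ 2 * (b * b ^ 2 * b⁻¹) := by group
    _ = 1 := by rw [hconj, mul_inv_cancel]

theorem pow_two_mul_eq_one_of_pow_eq_sq {a b : G} {m : ℕ} (hab : a ^ m = b ^ 2)
    (h : a * b * a = b) : a ^ (2 * m) = 1 := by
  rw [mul_comm, pow_mul, hab, ← pow_mul, pow_four_eq_one_of_pow_eq_sq hab h]

theorem sq_mul_sq_pow_succ {a b : G} {n : ℕ} (hab : a ^ (2 * n + 1) = b ^ 2)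
    (h : a * b * a = b) : b ^ 2 * (a ^ 2) ^ (n + 1) = a := by
  rw [← hab, ← pow_mul, ← pow_add, show 2 * n + 1 + 2 * (n + 1) = 2 * (2 * n + 1) + 1 by ring,
    pow_succ, pow_two_mul_eq_one_of_pow_eq_sq hab h, one_mul]

theorem sq_mul_pow_mul_self_mul_sq_mul_pow {x y : G} (hx : x ^ 4 = 1)
    (hxy : x * y * x⁻¹ = y⁻¹) (j : ℕ) : x ^ 2 * y ^ j * x * (x ^ 2 * y ^ j) = x := by
  have hc := (commute_sq_of_mul_mul_inv_eq_inv hxy).pow_right j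
  calc x ^ 2 * y ^ j * x * (x ^ 2 * y ^ j)
        = x ^ 2 * (y ^ j * x ^ 2) * (x * y ^ j * x⁻¹) * x := by group
    _ = x ^ 4 * x := by rw [← hc.eq, mul_pow_mul_inv_eq_inv_pow hxy]; group
    _ = x := by rw [hx, one_mul]

theorem sq_mul_pow_succ_sq {x y : G} {n : ℕ} (hx : x ^ 4 = 1) (hy : y ^ (2 * n + 1) = 1)
    (hxy : x * y * x⁻¹ = y⁻¹) : (x ^ 2 * y ^ (n + 1)) ^ 2 = y := by
  rw [((commute_sq_of_mul_mul_inv_eq_inv hxy).pow_right _).mul_pow, ← pow_mul, ← pow_mul, hx,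
    one_mul, show (n + 1) * 2 = 2 * n + 1 + 1 by ring, pow_succ, hy, one_mul]

theorem sq_mul_pow_succ_pow {x y : G} {n : ℕ} (hx : x ^ 4 = 1) (hy : y ^ (2 * n + 1) = 1)
    (hxy : x * y * x⁻¹ = y⁻¹) : (x ^ 2 * y ^ (n + 1)) ^ (2 * n + 1) = x ^ 2 := by
  rw [((commute_sq_of_mul_mul_inv_eq_inv hxy).pow_right _).mul_pow, ← pow_mul, ← pow_mul,
    mul_comm (n + 1), pow_mul y, hy, one_pow, mul_one, show 2 * (2 * n + 1) = 4 * n + 2 by ring,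
    pow_add, pow_mul, hx, one_pow, one_mul]

end Relations

theorem PresentedGroup.hom_ext_fin_two {G : Type*} [Group G] {rels : Set (FreeGroup (Fin 2))}
    {φ ψ : PresentedGroup rels →* G} (h0 : φ (.of 0) = ψ (.of 0))
    (h1 : φ (.of 1) = ψ (.of 1)) : φ = ψ :=
  PresentedGroup.ext (Fin.forall_fin_two.2 ⟨h0, h1⟩)

def zmodPowersHom {G : Type*} [Group G] {N : ℕ} (g : G) (hg : g ^ N = 1) :
    Multiplicative (ZMod N) →* G :=
  AddMonoidHom.toMultiplicativeLeft <|
    ZMod.lift N ⟨zmultiplesHom _ (Additive.ofMul g), by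
      rw [zmultiplesHom_apply, natCast_zsmul, ← ofMul_pow, hg, ofMul_one]⟩

@[simp]
theorem zmodPowersHom_ofAdd_one {G : Type*} [Group G] {N : ℕ} (g : G) (hg : g ^ N = 1) :
    zmodPowersHom g hg (.ofAdd 1) = g := by
  change Additive.toMul (ZMod.lift N _ 1) = g
  rw [← Int.cast_one, ZMod.lift_coe]
  simp

theorem MonoidHom.ext_multiplicative_zmod {G : Type*} [Group G] {N : ℕ}
    {φ ψ : Multiplicative (ZMod N) →* G} (h : φ (.ofAdd 1) = ψ (.ofAdd 1)) : φ = ψ := by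
  refine MonoidHom.ext fun a => ?_
  obtain ⟨i, hi⟩ := ZMod.intCast_surjective a.toAdd
  have ha : a = Multiplicative.ofAdd (1 : ZMod N) ^ i := by
    rw [← ofAdd_zsmul, zsmul_one, hi, ofAdd_toAdd]
  rw [ha, map_zpow, map_zpow, h]

namespace QuatGrp

variable {m : ℕ}

theorem of_zero_pow : (PresentedGroup.of 0 : QuatGrp m) ^ m = .of 1 ^ 2 := by
  have := PresentedGroup.one_of_mem (rels := quaternionRels m) (Set.mem_insert _ _)
  rwa [map_mul, map_inv, map_pow, map_pow, mul_inv_eq_one] at this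

theorem of_zero_mul_of_one_mul_of_zero :
    (PresentedGroup.of 0 : QuatGrp m) * .of 1 * .of 0 = .of 1 := by
  have := PresentedGroup.one_of_mem (rels := quaternionRels m) (Set.mem_insert_of_mem _ rfl)
  rwa [map_mul, map_mul, map_mul, map_inv, mul_inv_eq_one] at this

variable {G : Type*} [Group G]

def lift (u v : G) (huv : u ^ m = v ^ 2) (h : u * v * u = v) : QuatGrp m →* G :=
  PresentedGroup.toGroup (f := ![u, v]) <| by
    simp only [quaternionRels, Set.forall_mem_insert, Set.mem_singleton_iff, forall_eq, map_pow,
      map_mul, map_inv, FreeGroup.lift_apply_of, Matrix.cons_val_zero, Matrix.cons_val_one,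
      mul_inv_eq_one]
    exact ⟨huv, h⟩

variable {u v : G} {huv : u ^ m = v ^ 2} {h : u * v * u = v}

@[simp]
theorem lift_of_zero : lift u v huv h (.of 0) = u := PresentedGroup.toGroup.of _

@[simp]
theorem lift_of_one : lift u v huv h (.of 1) = v := PresentedGroup.toGroup.of _

end QuatGrp

namespace BGrp

variable {k n : ℕ}

theorem of_zero_pow : (PresentedGroup.of 0 : BGrp k n) ^ 2 ^ k = 1 := by
  have := PresentedGroup.one_of_mem (rels := bRels k n) (Set.mem_insert _ _)
  rwa [map_pow] at this

theorem of_one_pow : (PresentedGroup.of 1 : BGrp k n) ^ (2 * n + 1) = 1 := by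
  have := PresentedGroup.one_of_mem (rels := bRels k n)
    (Set.mem_insert_of_mem _ (Set.mem_insert _ _))
  rwa [map_pow] at this

theorem of_zero_mul_of_one_mul_inv :
    (PresentedGroup.of 0 : BGrp k n) * .of 1 * (.of 0)⁻¹ = (.of 1)⁻¹ := by
  have := PresentedGroup.one_of_mem (rels := bRels k n)
    (Set.mem_insert_of_mem _ (Set.mem_insert_of_mem _ rfl))
  rw [map_mul, map_mul, map_mul, map_inv] at this
  exact eq_inv_of_mul_eq_one_left this

variable {G : Type*} [Group G]

def lift (u v : G) (hu : u ^ 2 ^ k = 1) (hv : v ^ (2 * n + 1) = 1) (huv : u * v * u⁻¹ = v⁻¹) :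
    BGrp k n →* G :=
  PresentedGroup.toGroup (f := ![u, v]) <| by
    simp only [bRels, Set.forall_mem_insert, Set.mem_singleton_iff, forall_eq, map_pow, map_mul,
      map_inv, FreeGroup.lift_apply_of, Matrix.cons_val_zero, Matrix.cons_val_one]
    exact ⟨hu, hv, mul_eq_one_iff_eq_inv.2 huv⟩

variable {u v : G} {hu : u ^ 2 ^ k = 1} {hv : v ^ (2 * n + 1) = 1} {huv : u * v * u⁻¹ = v⁻¹}

@[simp]
theorem lift_of_zero : lift u v hu hv huv (.of 0) = u := PresentedGroup.toGroup.of _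

@[simp]
theorem lift_of_one : lift u v hu hv huv (.of 1) = v := PresentedGroup.toGroup.of _

def mulEquivZMod (k : ℕ) : BGrp k 0 ≃* Multiplicative (ZMod (2 ^ k)) :=
  MonoidHom.toMulEquiv
    (lift (.ofAdd 1) 1 (by rw [← ofAdd_nsmul, nsmul_one, ZMod.natCast_self, ofAdd_zero])
      (one_pow _) (by simp))
    (zmodPowersHom (.of 0) of_zero_pow)
    (PresentedGroup.hom_ext_fin_two (by simp)
      (by simpa using (of_one_pow (k := k) (n := 0)).symm))
    (MonoidHom.ext_multiplicative_zmod (by simp))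

def mulEquivQuatGrp (n : ℕ) : BGrp 2 n ≃* QuatGrp (2 * n + 1) :=
  have hx : (PresentedGroup.of 0 : BGrp 2 n) ^ 4 = 1 := of_zero_pow
  have hab := QuatGrp.of_zero_pow (m := 2 * n + 1)
  have h := QuatGrp.of_zero_mul_of_one_mul_of_zero (m := 2 * n + 1)
  MonoidHom.toMulEquiv
    (lift (.of 1) (.of 0 ^ 2) (pow_four_eq_one_of_pow_eq_sq hab h)
      (by rw [← pow_mul, pow_two_mul_eq_one_of_pow_eq_sq hab h])
      (mul_pow_mul_inv_eq_inv_pow (mul_mul_inv_eq_inv_of_mul_mul_eq h) 2))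
    (QuatGrp.lift (.of 0 ^ 2 * .of 1 ^ (n + 1)) (.of 0)
      (sq_mul_pow_succ_pow hx of_one_pow of_zero_mul_of_one_mul_inv)
      (sq_mul_pow_mul_self_mul_sq_mul_pow hx of_zero_mul_of_one_mul_inv _))
    (PresentedGroup.hom_ext_fin_two (by simp)
      (by simpa using sq_mul_pow_succ_sq hx of_one_pow of_zero_mul_of_one_mul_inv))
    (PresentedGroup.hom_ext_fin_two (by simpa using sq_mul_sq_pow_succ hab h) (by simp))

end BGrp

theorem bGrp_degenerate_cases_general (k n : ℕ) :
    Nonempty (BGrp k 0 ≃* Multiplicative (ZMod (2 ^ k))) ∧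
    Nonempty (BGrp 2 n ≃* QuatGrp (2 * n + 1)) :=
  ⟨⟨BGrp.mulEquivZMod k⟩, ⟨BGrp.mulEquivQuatGrp n⟩⟩

/-- For `n = 0`, `B_{2ᵏ·1} ≅ Z/2ᵏ`, and for `k = 2`,
`B_{4(2n+1)} ≅ Q_{4(2n+1)}`. -/
theorem bGrp_degenerate_cases (k n : ℕ) (hk : 2 ≤ k) :
    Nonempty (BGrp k 0 ≃* Multiplicative (ZMod (2 ^ k))) ∧
    Nonempty (BGrp 2 n ≃* QuatGrp (2 * n + 1)) :=
  bGrp_degenerate_cases_general k n
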